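/- The membership problem for a fixed deterministic top view weak k-pebble automaton is solvable in time O(n^k) on data words of length n. -/

import Mathlib

/-! Core definitions: weak pebble automata over data words. -/

inductive PAct where
  | stay | right | place | lift
deriving DecidableEq

inductive Tape (Sigma : Type) where
  | leftMarker | rightMarker | letter (σ : Sigma)

/-- The label of position `p` of the padded input `⊲ w ⊳` (positions `1..n` carry
the letters of `w`, position `0` the left-end marker, positions `> n` the right-end marker). -/
def labelAt {Sigma D : Type} (w : List (Sigma × D)) (p : ℕ) : Tape Sigma :=
  if p = 0 then Tape.leftMarker
  else
    match w[p - 1]? with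
    | some x => Tape.letter x.1
    | none => Tape.rightMarker

/-- The data value of position `p` (markers carry no data value). -/
def dataAt {Sigma D : Type} (w : List (Sigma × D)) (p : ℕ) : Option D :=
  if p = 0 then none else (w[p - 1]?).map Prod.snd

/-- A (one-way, alternating) weak `k`-pebble automaton over the alphabet `Sigma`.
Pebbles are numbered from `k` down to `1`; pebble `i` being the head pebble.
A transition `(i, σ, V, q) → (p, act)` is represented by `δ i σ V q p act`. -/
structure WeakPA (Sigma : Type) (k : ℕ) where
  Q : Type
  finQ : Fintype Q
  q0 : Q
  F : Set Q
  U : Set Q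
  δ : ℕ → Tape Sigma → Set ℕ → Q → Q → PAct → Prop

namespace WeakPA

variable {Sigma D : Type} {k : ℕ}

/-- A configuration `(i, q, θ)`: head pebble `i`, current state `q`,
pebble assignment `θ` (meaningful on pebbles `i,…,k`). -/
abbrev Config (A : WeakPA Sigma k) : Type := ℕ × A.Q × (ℕ → ℕ)

/-- The set `V = { l : l > i, l ≤ k, pebble l sees the same data value as pebble i }`. -/
def eqSet (w : List (Sigma × D)) (k i : ℕ) (θ : ℕ → ℕ) : Set ℕ :=
  {l | i < l ∧ l ≤ k ∧ (dataAt w (θ l)).isSome ∧ dataAt w (θ l) = dataAt w (θ i)}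

/-- One step of the weak `k`-PA `A` on the input word `w`. -/
def step (A : WeakPA Sigma k) (w : List (Sigma × D)) :
    A.Config → A.Config → Prop := fun c c' =>
  1 ≤ c.1 ∧ c.1 ≤ k ∧
  (∀ j, j ≠ c.1 → j ≠ c.1 - 1 → c'.2.2 j = c.2.2 j) ∧
  ∃ act : PAct,
    A.δ c.1 (labelAt w (c.2.2 c.1)) (eqSet w k c.1 c.2.2) c.2.1 c'.2.1 act ∧
    match act with
    | PAct.stay =>
        c'.1 = c.1 ∧ c'.2.2 c.1 = c.2.2 c.1 ∧ c'.2.2 (c.1 - 1) = c.2.2 (c.1 - 1)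
    | PAct.right =>
        c'.1 = c.1 ∧ c'.2.2 c.1 = c.2.2 c.1 + 1 ∧ c'.2.2 (c.1 - 1) = c.2.2 (c.1 - 1)
    | PAct.lift =>
        c'.1 = c.1 + 1 ∧ c'.2.2 c.1 = c.2.2 c.1 ∧ c'.2.2 (c.1 - 1) = c.2.2 (c.1 - 1)
    | PAct.place =>
        2 ≤ c.1 ∧ c'.1 = c.1 - 1 ∧ c'.2.2 c.1 = c.2.2 c.1 ∧ c'.2.2 (c.1 - 1) = c.2.2 c.1

/-- The alternating "leads to acceptance" semantics. -/
inductive Leads (A : WeakPA Sigma k) (w : List (Sigma × D)) : A.Config → Prop where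
  | final {c : A.Config} : c.2.1 ∈ A.F → Leads A w c
  | univ {c : A.Config} : c.2.1 ∈ A.U →
      (∀ c', A.step w c c' → Leads A w c') → Leads A w c
  | exist {c c' : A.Config} : c.2.1 ∉ A.F → c.2.1 ∉ A.U →
      A.step w c c' → Leads A w c' → Leads A w c

/-- The initial configuration: pebble `k` on the left-end marker in the initial state. -/
def initConfig (A : WeakPA Sigma k) : A.Config := (k, A.q0, fun _ => 0)

def Accepts (A : WeakPA Sigma k) (w : List (Sigma × D)) : Prop :=
  A.Leads w A.initConfig

/-- The data language of `A` over the data domain `D`. -/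
def Lang (A : WeakPA Sigma k) (D : Type) : Set (List (Sigma × D)) :=
  {w | A.Accepts w}

/-- A weak PA is nondeterministic if it has no universal states. -/
def Nondeterministic (A : WeakPA Sigma k) : Prop := A.U = ∅

/-- A weak PA is deterministic (over data domain `D`) if it is nondeterministic and
exactly one transition applies to each configuration. -/
def Deterministic (A : WeakPA Sigma k) (D : Type) : Prop :=
  A.U = ∅ ∧ ∀ (w : List (Sigma × D)) (c : A.Config),
    1 ≤ c.1 → c.1 ≤ k → ∃! c', A.step w c c'

/-- Top view weak PA: the head pebble `i` may test data equality only with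
pebble `i+1`, i.e. every transition has `V = ∅` or `V = {i+1}`. -/
def TopView (A : WeakPA Sigma k) : Prop :=
  ∀ i t V q q' a, A.δ i t V q q' a → V = ∅ ∨ V = {i + 1}

/-- The states `U` of universal states are required to be disjoint from `F`. -/
def WellFormed (A : WeakPA Sigma k) : Prop := ∀ q ∈ A.U, q ∉ A.F

end WeakPA

/-- `IterStep A w m c c'`: configuration `c'` is reached from `c` in exactly `m` steps. -/
def WeakPA.IterStep {Sigma D : Type} {k : ℕ} (A : WeakPA Sigma k)
    (w : List (Sigma × D)) : ℕ → A.Config → A.Config → Prop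
  | 0, c, c' => c' = c
  | m + 1, c, c' => ∃ c'', A.step w c c'' ∧ A.IterStep w m c'' c'

/-! Without universal states, acceptance means that some run reaches a final state. Positions
beyond the right-end marker are indistinguishable, so clamping every pebble position to
`{0, …, n+1}` and the head index to `{0, …, k+1}` yields a signature with `(k+2)·|Q|·(n+2)^k`
values, and configurations with equal signatures simulate each other step by step. An accepting
run that is at least that long visits two configurations with the same signature, and replaying
the rest of the run from the earlier one shortens it. -/

def PAct.apply : PAct → ℕ → (ℕ → ℕ) → ℕ × (ℕ → ℕ)
  | .stay, i, θ => (i, θ)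
  | .right, i, θ => (i, Function.update θ i (θ i + 1))
  | .lift, i, θ => (i + 1, θ)
  | .place, i, θ => (i - 1, Function.update θ (i - 1) (θ i))

theorem PAct.apply_fst (act : PAct) (i : ℕ) (θ θ' : ℕ → ℕ) :
    (act.apply i θ).1 = (act.apply i θ').1 := by
  cases act <;> rfl

theorem PAct.min_apply_snd_eq (act : PAct) {i k N : ℕ} {θ θ' : ℕ → ℕ} (hik : i ≤ k)
    (h : ∀ j, 1 ≤ j → j ≤ k → min (θ j) N = min (θ' j) N) {j : ℕ} (hj : 1 ≤ j) (hjk : j ≤ k) :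
    min ((act.apply i θ).2 j) N = min ((act.apply i θ').2 j) N := by
  cases act <;> simp only [PAct.apply, Function.update_apply] <;> (try split_ifs) <;>
    subst_vars <;> first | exact h _ hj hjk | have := h _ hj hjk; omega | exact h _ (by omega) hik

namespace WeakPA

variable {Sigma D : Type} {k : ℕ}

theorem labelAt_min_length_succ (w : List (Sigma × D)) (p : ℕ) :
    labelAt w (min p (w.length + 1)) = labelAt w p := by
  rcases le_total p (w.length + 1) with hp | hp
  · rw [min_eq_left hp]
  · rw [min_eq_right hp]
    simp [labelAt, show p ≠ 0 by omega, List.getElem?_eq_none (show w.length ≤ p - 1 by omega)]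

theorem dataAt_min_length_succ (w : List (Sigma × D)) (p : ℕ) :
    dataAt w (min p (w.length + 1)) = dataAt w p := by
  rcases le_total p (w.length + 1) with hp | hp
  · rw [min_eq_left hp]
  · rw [min_eq_right hp]
    simp [dataAt, show p ≠ 0 by omega, List.getElem?_eq_none (show w.length ≤ p - 1 by omega)]

theorem eqSet_congr (w : List (Sigma × D)) {i : ℕ} {θ θ' : ℕ → ℕ}
    (h : ∀ j, i ≤ j → j ≤ k → dataAt w (θ j) = dataAt w (θ' j)) :
    eqSet w k i θ = eqSet w k i θ' := by
  ext l
  simp only [eqSet, Set.mem_ofPred_eq]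
  constructor <;> rintro ⟨hil, hlk, hsome, hdata⟩
  · rw [h l hil.le hlk, h i le_rfl (hil.le.trans hlk)] at *
    exact ⟨hil, hlk, hsome, hdata⟩
  · rw [← h l hil.le hlk, ← h i le_rfl (hil.le.trans hlk)] at *
    exact ⟨hil, hlk, hsome, hdata⟩

theorem step_iff (A : WeakPA Sigma k) (w : List (Sigma × D)) (c c' : A.Config) :
    A.step w c c' ↔ 1 ≤ c.1 ∧ c.1 ≤ k ∧ ∃ act : PAct,
      A.δ c.1 (labelAt w (c.2.2 c.1)) (eqSet w k c.1 c.2.2) c.2.1 c'.2.1 act ∧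
      (act = .place → 2 ≤ c.1) ∧ act.apply c.1 c.2.2 = (c'.1, c'.2.2) := by
  obtain ⟨i, q, θ⟩ := c
  obtain ⟨i', q', θ'⟩ := c'
  simp only [step]
  constructor
  · rintro ⟨h1, h2, hrest, act, hδ, hact⟩
    refine ⟨h1, h2, act, hδ, ?_⟩
    cases act <;> simp only [PAct.apply, Prod.mk.injEq, reduceCtorEq, false_implies,
      true_implies, true_and, funext_iff, Function.update_apply] at hact ⊢ <;> grind
  · rintro ⟨h1, h2, act, hδ, hplace, happ⟩
    cases act <;> simp only [PAct.apply, Prod.mk.injEq] at happ <;> obtain ⟨rfl, rfl⟩ := happ <;>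
      simp only [Function.update_apply] <;> grind

-- Positions past the right-end marker all read `⊳` and carry no data, and a head index above `k`
-- admits no step, so both are clamped.
def signature (A : WeakPA Sigma k) (n : ℕ) (c : A.Config) :
    Fin (k + 2) × A.Q × (Fin k → Fin (n + 2)) :=
  (⟨min c.1 (k + 1), by omega⟩, c.2.1, fun l => ⟨min (c.2.2 (l + 1)) (n + 1), by omega⟩)

theorem signature_eq_iff (A : WeakPA Sigma k) (n : ℕ) (c d : A.Config) :
    A.signature n c = A.signature n d ↔ min c.1 (k + 1) = min d.1 (k + 1) ∧ c.2.1 = d.2.1 ∧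
      ∀ j, 1 ≤ j → j ≤ k → min (c.2.2 j) (n + 1) = min (d.2.2 j) (n + 1) := by
  simp only [signature, Prod.mk.injEq, Fin.mk.injEq, funext_iff]
  refine and_congr_right fun _ => and_congr_right fun _ => ⟨fun h j hj hjk => ?_, fun h l => ?_⟩
  · simpa [Nat.sub_add_cancel hj] using h ⟨j - 1, by omega⟩
  · exact h (l + 1) (by omega) (by omega)

theorem step_simulation (A : WeakPA Sigma k) (w : List (Sigma × D)) {c d c' : A.Config}
    (hcd : A.signature w.length c = A.signature w.length d) (h : A.step w c c') :
    ∃ d', A.step w d d' ∧ A.signature w.length c' = A.signature w.length d' := by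
  obtain ⟨hi, hq, hθ⟩ := (signature_eq_iff A _ c d).1 hcd
  obtain ⟨h1, h2, act, hδ, hplace, happ⟩ := (step_iff A w c c').1 h
  obtain ⟨happ₁, happ₂⟩ := Prod.ext_iff.1 happ
  have hdi : d.1 = c.1 := by omega
  have hdata (j : ℕ) (hj : c.1 ≤ j) (hjk : j ≤ k) : dataAt w (c.2.2 j) = dataAt w (d.2.2 j) := by
    rw [← dataAt_min_length_succ w (c.2.2 j), hθ j (by omega) hjk, dataAt_min_length_succ]
  have hlabel : labelAt w (c.2.2 c.1) = labelAt w (d.2.2 c.1) := by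
    rw [← labelAt_min_length_succ w (c.2.2 c.1), hθ c.1 h1 h2, labelAt_min_length_succ]
  refine ⟨((act.apply d.1 d.2.2).1, c'.2.1, (act.apply d.1 d.2.2).2), ?_, ?_⟩
  · refine (step_iff A w _ _).2 ⟨by omega, by omega, act, ?_, by rwa [hdi], rfl⟩
    rwa [hdi, ← hq, ← hlabel, ← eqSet_congr w hdata]
  · rw [signature_eq_iff, ← happ₁, hdi, PAct.apply_fst act c.1 c.2.2 d.2.2]
    refine ⟨rfl, rfl, fun j hj hjk => ?_⟩
    rw [← happ₂]
    exact act.min_apply_snd_eq h2 hθ hj hjk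

theorem iterStep_add (A : WeakPA Sigma k) (w : List (Sigma × D)) (m n : ℕ) (x z : A.Config) :
    A.IterStep w (m + n) x z ↔ ∃ y, A.IterStep w m x y ∧ A.IterStep w n y z := by
  induction m generalizing x with
  | zero => simp [IterStep]
  | succ m ih => simp only [Nat.succ_add, IterStep, ih]; grind

theorem IterStep.simulation {β : Type*} {A : WeakPA Sigma k} {w : List (Sigma × D)}
    {f : A.Config → β}
    (hsim : ∀ c d c', f c = f d → A.step w c c' → ∃ d', A.step w d d' ∧ f c' = f d')
    {m : ℕ} {c d c' : A.Config} (hcd : f c = f d) (h : A.IterStep w m c c') :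
    ∃ d', A.IterStep w m d d' ∧ f c' = f d' := by
  induction m generalizing c d with
  | zero => exact ⟨d, rfl, h ▸ hcd⟩
  | succ m ih =>
    obtain ⟨c₁, hc₁, hrest⟩ := h
    obtain ⟨d₁, hd₁, hcd₁⟩ := hsim c d c₁ hcd hc₁
    obtain ⟨d', hd', hcd'⟩ := ih hcd₁ hrest
    exact ⟨d', ⟨d₁, hd₁, hd'⟩, hcd'⟩

theorem exists_iterStep_lt_card {β : Type*} [Fintype β] {A : WeakPA Sigma k}
    {w : List (Sigma × D)} (f : A.Config → β)
    (hsim : ∀ c d c', f c = f d → A.step w c c' → ∃ d', A.step w d d' ∧ f c' = f d')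
    {P : A.Config → Prop} (hP : ∀ c d, f c = f d → P c → P d) {m : ℕ} {x y : A.Config}
    (h : A.IterStep w m x y) (hy : P y) :
    ∃ m' < Fintype.card β, ∃ y', A.IterStep w m' x y' ∧ P y' := by
  induction m using Nat.strong_induction_on generalizing y with
  | _ m ih =>
    by_cases hm : m < Fintype.card β
    · exact ⟨m, hm, y, h, hy⟩
    have hsplit (i : Fin (m + 1)) : ∃ z, A.IterStep w i x z ∧ A.IterStep w (m - i) z y :=
      (iterStep_add A w _ _ x y).1 (by rwa [Nat.add_sub_cancel' i.is_le])
    choose z hz using hsplit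
    obtain ⟨i, j, hij, hfij⟩ :=
      Fintype.exists_ne_map_eq_of_card_lt (f ∘ z) (by rw [Fintype.card_fin]; omega)
    obtain ⟨p, q, hpq, hfpq⟩ : ∃ p q : Fin (m + 1), p < q ∧ f (z q) = f (z p) := by
      rcases hij.lt_or_gt with h | h
      exacts [⟨i, j, h, hfij.symm⟩, ⟨j, i, h, hfij⟩]
    obtain ⟨y', hy', hyy'⟩ := IterStep.simulation hsim hfpq (hz q).2
    exact ih (p + (m - q)) (by omega) ((iterStep_add A w _ _ _ _).2 ⟨z p, (hz p).1, hy'⟩)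
      (hP y y' hyy' hy)

theorem leads_iff_exists_iterStep {A : WeakPA Sigma k} (hA : A.Nondeterministic)
    (w : List (Sigma × D)) (c : A.Config) :
    A.Leads w c ↔ ∃ m c', A.IterStep w m c c' ∧ c'.2.1 ∈ A.F := by
  unfold Nondeterministic at hA
  constructor
  · intro h
    induction h with
    | final hF => exact ⟨0, _, rfl, hF⟩
    | univ hU => simp [hA] at hU
    | exist _ _ hstep _ ih =>
      obtain ⟨m, c', hm, hc'⟩ := ih
      exact ⟨m + 1, c', ⟨_, hstep, hm⟩, hc'⟩
  · rintro ⟨m, c', h, hc'⟩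
    induction m generalizing c with
    | zero => exact .final (h ▸ hc')
    | succ m ih =>
      obtain ⟨c₁, hc₁, hrest⟩ := h
      by_cases hF : c.2.1 ∈ A.F
      · exact .final hF
      · exact .exist hF (by simp [hA]) hc₁ (ih c₁ hrest)

end WeakPA

theorem deterministic_topView_membership_time_O_n_pow_k_general
    (Sigma : Type) (k : ℕ) (A : WeakPA Sigma k)
    (hdet : A.Deterministic ℕ) :
    ∃ C : ℕ, ∀ w : List (Sigma × ℕ),
      w ∈ A.Lang ℕ ↔
        ∃ m ≤ C * (w.length + 2) ^ k, ∃ c : A.Config,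
          A.IterStep w m A.initConfig c ∧ c.2.1 ∈ A.F := by
  let _ := A.finQ
  refine ⟨(k + 2) * Fintype.card A.Q, fun w => ?_⟩
  have hcard : Fintype.card (Fin (k + 2) × A.Q × (Fin k → Fin (w.length + 2))) =
      (k + 2) * Fintype.card A.Q * (w.length + 2) ^ k := by
    simp [mul_assoc]
  change A.Leads w A.initConfig ↔ _
  rw [WeakPA.leads_iff_exists_iterStep hdet.1]
  constructor
  · rintro ⟨m, c, hm, hc⟩
    obtain ⟨m', hm', c', hc'⟩ := WeakPA.exists_iterStep_lt_card (A.signature w.length)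
      (fun _ _ _ => A.step_simulation w) (P := fun c => c.2.1 ∈ A.F)
      (fun c d hcd hc => ((A.signature_eq_iff _ c d).1 hcd).2.1 ▸ hc) hm hc
    exact ⟨m', hcard ▸ hm'.le, c', hc'⟩
  · rintro ⟨m, -, c, hm, hc⟩
    exact ⟨m, c, hm, hc⟩

/-- The membership problem for a fixed deterministic top view weak
`k`-pebble automaton is solvable in time `O(n^k)` on data words of length `n`:
there is a constant `C` such that membership of a word `w` is equivalent to the
(unique, deterministic) run reaching a final state within `C·(n+2)^k` steps. -/
theorem deterministic_topView_membership_time_O_n_pow_k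
    (Sigma : Type) (k : ℕ) (hk : 1 ≤ k) (A : WeakPA Sigma k)
    (htop : A.TopView) (hdet : A.Deterministic ℕ) :
    ∃ C : ℕ, ∀ w : List (Sigma × ℕ),
      w ∈ A.Lang ℕ ↔
        ∃ m ≤ C * (w.length + 2) ^ k, ∃ c : A.Config,
          A.IterStep w m A.initConfig c ∧ c.2.1 ∈ A.F :=
  deterministic_topView_membership_time_O_n_pow_k_general Sigma k A hdet
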